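/- arXiv:1910.01676 — 3 statements merged into one kernel-verified Lean document; each statement's English description precedes it below -/
import Mathlib

section
/- Let U be an antisymmetric p×p integer matrix, q an invertible element of a commutative domain R, and T(U) the quantum torus R⟨x_1^{±1},...,x_p^{±1}⟩/(x_i x_j = q^{U_{ij}} x_j x_i). For each positive integer n there is a unique R-algebra homomorphism F_n : T(n²U) → T(U) with F_n(x_i) = x_i^n, and F_n is injective. -/
open scoped BigOperators

/-- Exponent appearing in the Weyl normalization of a monomial:
`∑_{i<j} U_{ij} k_i k_j`. -/
def weylExp {p : ℕ} (U : Matrix (Fin p) (Fin p) ℤ) (k : Fin p → ℤ) : ℤ :=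
  ∑ i, ∑ j, if i < j then U i j * k i * k j else 0

/-- The ordered product `x₁^{k₁} ⋯ x_p^{k_p}`. -/
def orderedProd {p : ℕ} {A : Type} [Monoid A] (x : Fin p → Aˣ) (k : Fin p → ℤ) : A :=
  (((List.finRange p).map fun i => ((x i ^ k i : Aˣ) : A)).prod)

/-- The Weyl-normalized monomial
`X^k = q^{-(1/2)∑_{i<j} U_{ij} k_i k_j} x₁^{k₁} ⋯ x_p^{k_p}`, where `s = q^{1/2}`. -/
def normMono {R : Type} [CommRing R] {p : ℕ} {A : Type} [Ring A] [Algebra R A]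
    (s : Rˣ) (U : Matrix (Fin p) (Fin p) ℤ) (x : Fin p → Aˣ) (k : Fin p → ℤ) : A :=
  ((s ^ (-(weylExp U k)) : Rˣ) : R) • orderedProd x k

/-- The antisymmetric bilinear form `⟨k,n⟩_U = ∑_{i,j} U_{ij} k_i n_j`. -/
def formU {p : ℕ} (U : Matrix (Fin p) (Fin p) ℤ) (k n : Fin p → ℤ) : ℤ :=
  ∑ i, ∑ j, U i j * k i * n j

/-- `A` (with distinguished invertible generators `x i` and basis `b` of normalized
monomials) is the quantum torus over `R` associated to `U` with quantum parameter
`q = s²`: the generators satisfy `x_i x_j = q^{U_{ij}} x_j x_i` and the Weyl-normalized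
monomials `X^k`, `k ∈ ℤ^p`, form an `R`-basis of `A`. -/
def IsQuantumTorus {R : Type} [CommRing R] {p : ℕ} {A : Type} [Ring A] [Algebra R A]
    (s : Rˣ) (U : Matrix (Fin p) (Fin p) ℤ) (x : Fin p → Aˣ)
    (b : Module.Basis (Fin p → ℤ) R A) : Prop :=
  (∀ i j, (x i : A) * (x j : A) = ((s ^ (2 * U i j) : Rˣ) : R) • ((x j : A) * (x i : A)))
  ∧ ∀ k : Fin p → ℤ, b k = normMono s U x k


/-! In a quantum torus the normalized monomials multiply as `X^k X^m = s^{e_U(k,m)} X^{k+m}`,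
where the exponent `e_U(k,m)` (`structExp`) is the Weyl correction plus the powers of `q`
collected while commuting the generators of `x^m` past those of `x^k`. It is linear in `U`
and quadratic in `(k, m)`, so `e_{n²U}(k,m) = e_U(nk,nm)`; hence the linear map
`X^k ↦ X^{nk}` is multiplicative and sends `x_i` to `x_i^n`. Conversely the Weyl normalizations
scale the same way, so every algebra map with `F x_i = x_i^n` sends `X^k` to `X^{nk}`. This gives
uniqueness, and injectivity because `k ↦ nk` is injective for `n ≠ 0`. -/

/-- `pairSum f [a₁, …, aᵣ] = ∑_{i < j} f aⱼ aᵢ`. -/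
def pairSum {ι : Type*} (f : ι → ι → ℤ) : List ι → ℤ
  | [] => 0
  | a :: L => (L.map (f · a)).sum + pairSum f L

theorem pairSum_mul_left {ι : Type*} (c : ℤ) (f : ι → ι → ℤ) :
    ∀ L : List ι, pairSum (fun j a => c * f j a) L = c * pairSum f L
  | [] => by simp [pairSum]
  | a :: L => by simp [pairSum, pairSum_mul_left c f L, List.sum_map_mul_left, mul_add]

section QCommuting

variable {G : Type*} [Group G] {z : G}

theorem mul_zpow_eq_of_mul_eq (hz : ∀ g, Commute z g) {a b : G} (h : a * b = z * (b * a))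
    (t : ℤ) : a * b ^ t = z ^ t * (b ^ t * a) := by
  have hconj : MulAut.conj a b = z * b := by
    rw [MulAut.conj_apply, h]; group
  have key : MulAut.conj a (b ^ t) = z ^ t * b ^ t := by
    rw [map_zpow, hconj, (hz b).mul_zpow]
  rw [MulAut.conj_apply, mul_inv_eq_iff_eq_mul] at key
  rw [key, mul_assoc]

theorem zpow_mul_zpow_eq_of_mul_eq (hz : ∀ g, Commute z g) {a b : G} (h : a * b = z * (b * a))
    (m t : ℤ) : a ^ m * b ^ t = z ^ (m * t) * (b ^ t * a ^ m) := by
  have h' : b ^ t * a = z ^ (-t) * (a * b ^ t) := by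
    rw [mul_zpow_eq_of_mul_eq hz h t, zpow_neg, inv_mul_cancel_left]
  rw [mul_zpow_eq_of_mul_eq (fun g => (hz g).zpow_left _) h' m, ← zpow_mul, ← mul_assoc,
    ← zpow_add, neg_mul, mul_comm t m, add_neg_cancel, zpow_zero, one_mul]

variable {ι : Type*} {x : ι → G} {E : ι → ι → ℤ}

theorem list_prod_zpow_mul_zpow (hz : ∀ g, Commute z g)
    (hx : ∀ i j, x i * x j = z ^ E i j * (x j * x i)) (k : ι → ℤ) (a : ι) (t : ℤ) :
    ∀ L : List ι, (L.map fun j => x j ^ k j).prod * x a ^ t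
      = z ^ (L.map fun j => E j a * k j * t).sum * (x a ^ t * (L.map fun j => x j ^ k j).prod)
  | [] => by simp
  | c :: L => by
    have hzpow : ∀ (e : ℤ) g, Commute (z ^ e) g := fun e g => (hz g).zpow_left e
    set P := (L.map fun j => x j ^ k j).prod
    set S := (L.map fun j => E j a * k j * t).sum
    simp only [List.map_cons, List.prod_cons, List.sum_cons]
    calc x c ^ k c * P * x a ^ t = x c ^ k c * (z ^ S * (x a ^ t * P)) := by
          rw [mul_assoc, list_prod_zpow_mul_zpow hz hx k a t L]
      _ = z ^ S * ((x c ^ k c * x a ^ t) * P) := by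
          rw [← mul_assoc, ← (hzpow S _).eq, mul_assoc, mul_assoc]
      _ = z ^ (E c a * k c * t + S) * (x a ^ t * (x c ^ k c * P)) := by
          rw [zpow_mul_zpow_eq_of_mul_eq (hzpow _) (hx c a), ← zpow_mul, ← mul_assoc (E c a),
            add_comm, zpow_add]
          simp only [mul_assoc (G := G)]

theorem list_prod_zpow_mul_list_prod_zpow (hz : ∀ g, Commute z g)
    (hx : ∀ i j, x i * x j = z ^ E i j * (x j * x i)) (k m : ι → ℤ) :
    ∀ L : List ι, (L.map fun i => x i ^ k i).prod * (L.map fun i => x i ^ m i).prod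
      = z ^ pairSum (fun j a => E j a * k j * m a) L * (L.map fun i => x i ^ (k i + m i)).prod
  | [] => by simp [pairSum]
  | a :: L => by
    have hzpow : ∀ (e : ℤ) g, Commute (z ^ e) g := fun e g => (hz g).zpow_left e
    set Pk := (L.map fun j => x j ^ k j).prod
    set Pm := (L.map fun j => x j ^ m j).prod
    set S := (L.map fun j => E j a * k j * m a).sum
    simp only [List.map_cons, List.prod_cons, pairSum]
    calc x a ^ k a * Pk * (x a ^ m a * Pm) = x a ^ k a * ((Pk * x a ^ m a) * Pm) := by
          simp only [mul_assoc (G := G)]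
      _ = z ^ S * (x a ^ (k a + m a) * (Pk * Pm)) := by
          rw [list_prod_zpow_mul_zpow hz hx k a (m a) L, zpow_add, mul_assoc, ← mul_assoc,
            ← (hzpow S _).eq]
          simp only [mul_assoc (G := G)]
          rfl
      _ = _ := by
          rw [list_prod_zpow_mul_list_prod_zpow hz hx k m L, ← mul_assoc (x a ^ _),
            ← (hzpow _ _).eq, zpow_add z]
          simp only [mul_assoc (G := G)]
          rfl

end QCommuting

section OrderedProd

variable {p : ℕ} {A : Type} [Monoid A] (x : Fin p → Aˣ)

theorem orderedProd_eq_val_list_prod (k : Fin p → ℤ) :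
    orderedProd x k = (((List.finRange p).map fun i => x i ^ k i).prod : Aˣ) := by
  rw [orderedProd, ← Units.coeHom_apply, map_list_prod, List.map_map]
  rfl

theorem orderedProd_zero : orderedProd x 0 = 1 := by
  simp [orderedProd]

theorem orderedProd_single (i : Fin p) (t : ℤ) :
    orderedProd x (Pi.single i t) = ((x i ^ t : Aˣ) : A) := by
  rw [orderedProd, List.prod_map_eq_pow_single i _ fun j hj _ => by
    rw [Pi.single_eq_of_ne hj, zpow_zero, Units.val_one]]
  rw [List.count_eq_one_of_mem (List.nodup_finRange p) (List.mem_finRange i), pow_one,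
    Pi.single_eq_same]

theorem map_orderedProd {B : Type} {F : Type*} [Monoid B] [FunLike F A B] [MonoidHomClass F A B]
    (f : F) (y : Fin p → Bˣ) (n : ℕ) (hf : ∀ i, f (x i) = (y i : B) ^ n) (k : Fin p → ℤ) :
    f (orderedProd x k) = orderedProd y ((n : ℤ) • k) := by
  have hu : ∀ i, Units.map f (x i) = y i ^ n := fun i => Units.ext (by simp [hf])
  rw [orderedProd_eq_val_list_prod, orderedProd_eq_val_list_prod]
  change ((f : A →* B) _) = _
  rw [← Units.coe_map, map_list_prod, List.map_map]
  congr 3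
  ext i
  simp [hu, ← zpow_natCast, ← zpow_mul]

end OrderedProd

section QuantumCommutation

variable {R : Type} [CommRing R] {A : Type} [Ring A] [Algebra R A] {p : ℕ}

theorem orderedProd_mul_orderedProd (s : Rˣ) (E : Fin p → Fin p → ℤ) (x : Fin p → Aˣ)
    (hx : ∀ i j, (x i : A) * x j = ((s ^ E i j : Rˣ) : R) • ((x j : A) * x i))
    (k m : Fin p → ℤ) :
    orderedProd x k * orderedProd x m
      = ((s ^ pairSum (fun j a => E j a * k j * m a) (List.finRange p) : Rˣ) : R)
        • orderedProd x (k + m) := by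
  -- In `Aˣ` the scalar `s ^ e` becomes the central unit `z ^ e`.
  set z : Aˣ := Units.map (algebraMap R A : R →* A) s
  have hz : ∀ g, Commute z g := fun g => Units.ext (Algebra.commutes _ _)
  have hsmul : ∀ (e : ℤ) (a : A), ((s ^ e : Rˣ) : R) • a = ((z ^ e : Aˣ) : A) * a := by
    intro e a
    rw [Algebra.smul_def, ← map_zpow]
    rfl
  have hxz : ∀ i j, x i * x j = z ^ E i j * (x j * x i) := fun i j =>
    Units.ext (by simpa only [hsmul, Units.val_mul] using hx i j)
  rw [hsmul, orderedProd_eq_val_list_prod, orderedProd_eq_val_list_prod,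
    orderedProd_eq_val_list_prod, ← Units.val_mul, ← Units.val_mul,
    list_prod_zpow_mul_list_prod_zpow hz hxz k m]
  rfl

end QuantumCommutation

section Exponents

variable {p : ℕ} (U : Matrix (Fin p) (Fin p) ℤ) (c : ℤ) (k m : Fin p → ℤ)

theorem weylExp_smul_matrix : weylExp (c • U) k = c * weylExp U k := by
  simp only [weylExp, Finset.mul_sum, Matrix.smul_apply, smul_eq_mul, mul_ite, mul_zero, mul_assoc]

theorem weylExp_smul : weylExp U (c • k) = c ^ 2 * weylExp U k := by
  simp only [weylExp, Finset.mul_sum, Pi.smul_apply, smul_eq_mul, mul_ite, mul_zero]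
  refine Finset.sum_congr rfl fun i _ => Finset.sum_congr rfl fun j _ => ?_
  split_ifs <;> ring

theorem weylExp_single (i : Fin p) (t : ℤ) : weylExp U (Pi.single i t) = 0 := by
  refine Finset.sum_eq_zero fun a _ => Finset.sum_eq_zero fun j _ => ?_
  split_ifs with h
  · rcases eq_or_ne a i with rfl | ha
    · rw [Pi.single_eq_of_ne h.ne', mul_zero]
    · rw [Pi.single_eq_of_ne ha, mul_zero, zero_mul]
  · rfl

def structExp : ℤ :=
  pairSum (fun j a => 2 * U j a * k j * m a) (List.finRange p)
    + weylExp U (k + m) - weylExp U k - weylExp U m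

theorem structExp_smul_matrix : structExp (c • U) k m = c * structExp U k m := by
  have hpair : (fun j a => 2 * (c • U) j a * k j * m a)
      = fun j a => c * (2 * U j a * k j * m a) := by
    ext j a; simp only [Matrix.smul_apply, smul_eq_mul]; ring
  simp only [structExp, hpair, pairSum_mul_left, weylExp_smul_matrix]
  ring

theorem structExp_smul : structExp U (c • k) (c • m) = c ^ 2 * structExp U k m := by
  have hpair : (fun j a => 2 * U j a * (c • k) j * (c • m) a)
      = fun j a => c ^ 2 * (2 * U j a * k j * m a) := by
    ext j a; simp only [Pi.smul_apply, smul_eq_mul]; ring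
  simp only [structExp, hpair, pairSum_mul_left, ← smul_add, weylExp_smul]
  ring

end Exponents

namespace IsQuantumTorus

section Basis

variable {R : Type} [CommRing R] {p : ℕ} {A : Type} [Ring A] [Algebra R A] {s : Rˣ}
  {U : Matrix (Fin p) (Fin p) ℤ} {x : Fin p → Aˣ} {b : Module.Basis (Fin p → ℤ) R A}

theorem basis_zero (h : IsQuantumTorus s U x b) : b 0 = 1 := by
  simp [h.2, normMono, orderedProd_zero, weylExp]

theorem basis_single (h : IsQuantumTorus s U x b) (i : Fin p) (t : ℤ) :
    b (Pi.single i t) = ((x i ^ t : Aˣ) : A) := by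
  rw [h.2, normMono, weylExp_single, orderedProd_single, neg_zero, zpow_zero, Units.val_one,
    one_smul]

theorem basis_mul_basis (h : IsQuantumTorus s U x b) (k m : Fin p → ℤ) :
    b k * b m = ((s ^ structExp U k m : Rˣ) : R) • b (k + m) := by
  rw [h.2, h.2, h.2, normMono, normMono, normMono, smul_mul_smul_comm,
    orderedProd_mul_orderedProd s (fun i j => 2 * U i j) x h.1, smul_smul, smul_smul,
    ← Units.val_mul, ← Units.val_mul, ← Units.val_mul, ← zpow_add, ← zpow_add, ← zpow_add,
    structExp]
  congr 3
  ring

end Basis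

section Frobenius

variable {R : Type} [CommRing R] {p : ℕ} {s : Rˣ} {U : Matrix (Fin p) (Fin p) ℤ} {n : ℕ}
  {A B : Type} [Ring A] [Algebra R A] [Ring B] [Algebra R B]
  {xA : Fin p → Aˣ} {bA : Module.Basis (Fin p → ℤ) R A}
  {xB : Fin p → Bˣ} {bB : Module.Basis (Fin p → ℤ) R B}

theorem apply_basis_of_apply_generator (hA : IsQuantumTorus s (((n : ℤ) ^ 2) • U) xA bA)
    (hB : IsQuantumTorus s U xB bB) (F : A →ₐ[R] B) (hF : ∀ i, F (xA i) = (xB i : B) ^ n)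
    (k : Fin p → ℤ) : F (bA k) = bB ((n : ℤ) • k) := by
  rw [hA.2, hB.2, normMono, normMono, map_smul, map_orderedProd xA F xB n hF,
    weylExp_smul_matrix, weylExp_smul]

noncomputable def frobenius (hA : IsQuantumTorus s (((n : ℤ) ^ 2) • U) xA bA)
    (hB : IsQuantumTorus s U xB bB) : A →ₐ[R] B :=
  AlgHom.ofLinearMap (bA.constr R fun k => bB ((n : ℤ) • k))
    (by rw [← hA.basis_zero, Module.Basis.constr_basis, smul_zero, hB.basis_zero])
    (by
      rw [LinearMap.map_mul_iff]
      refine bA.ext fun k => bA.ext fun m => ?_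
      simp only [LinearMap.compr₂_apply, LinearMap.compl₂_apply, LinearMap.comp_apply,
        LinearMap.mul_apply']
      rw [hA.basis_mul_basis, map_smul, Module.Basis.constr_basis, Module.Basis.constr_basis,
        Module.Basis.constr_basis, hB.basis_mul_basis, structExp_smul_matrix, ← structExp_smul,
        smul_add])

theorem frobenius_apply_generator (hA : IsQuantumTorus s (((n : ℤ) ^ 2) • U) xA bA)
    (hB : IsQuantumTorus s U xB bB) (i : Fin p) : frobenius hA hB (xA i) = (xB i : B) ^ n := by
  rw [← zpow_one (xA i), ← hA.basis_single]
  change bA.constr R _ (bA _) = _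
  rw [Module.Basis.constr_basis, ← Pi.single_smul, smul_eq_mul, mul_one, hB.basis_single,
    zpow_natCast, Units.val_pow_eq_pow_val]

theorem injective_of_apply_generator (hA : IsQuantumTorus s (((n : ℤ) ^ 2) • U) xA bA)
    (hB : IsQuantumTorus s U xB bB) (hn : n ≠ 0) (F : A →ₐ[R] B)
    (hF : ∀ i, F (xA i) = (xB i : B) ^ n) : Function.Injective F := by
  have hFb : F.toLinearMap ∘ bA = bB ∘ ((n : ℤ) • ·) :=
    funext (apply_basis_of_apply_generator hA hB F hF)
  refine LinearMap.injective_of_linearIndependent (f := F.toLinearMap) bA.span_eq ?_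
  rw [hFb]
  exact bB.linearIndependent.comp _ (smul_right_injective _ (by exact_mod_cast hn))

theorem eq_frobenius_of_apply_generator (hA : IsQuantumTorus s (((n : ℤ) ^ 2) • U) xA bA)
    (hB : IsQuantumTorus s U xB bB) (F : A →ₐ[R] B)
    (hF : ∀ i, F (xA i) = (xB i : B) ^ n) : F = hA.frobenius hB :=
  AlgHom.toLinearMap_injective <| bA.ext fun k => by
    simp only [AlgHom.toLinearMap_apply, hA.apply_basis_of_apply_generator hB F hF,
      hA.apply_basis_of_apply_generator hB _ (hA.frobenius_apply_generator hB)]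

end Frobenius

end IsQuantumTorus

theorem frobenius_quantumTorus_general {R : Type} [CommRing R] {p : ℕ} (s : Rˣ)
    (U : Matrix (Fin p) (Fin p) ℤ)
    (n : ℕ) (hn : 0 < n)
    {A B : Type} [Ring A] [Algebra R A] [Ring B] [Algebra R B]
    (xA : Fin p → Aˣ) (bA : Module.Basis (Fin p → ℤ) R A)
    (hA : IsQuantumTorus s (((n : ℤ) ^ 2) • U) xA bA)
    (xB : Fin p → Bˣ) (bB : Module.Basis (Fin p → ℤ) R B)
    (hB : IsQuantumTorus s U xB bB) :
    (∃! F : A →ₐ[R] B, ∀ i, F ((xA i : A)) = ((xB i : B)) ^ n)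
    ∧ ∀ F : A →ₐ[R] B, (∀ i, F ((xA i : A)) = ((xB i : B)) ^ n) → Function.Injective F :=
  ⟨⟨hA.frobenius hB, hA.frobenius_apply_generator hB, hA.eq_frobenius_of_apply_generator hB⟩,
    hA.injective_of_apply_generator hB hn.ne'⟩

/-- Frobenius homomorphism of quantum tori: if `A` is the quantum torus for `n²U` and
`B` the quantum torus for `U` (over a commutative domain `R`, same `q^{1/2} = s`, `U`
antisymmetric), then there is a unique `R`-algebra homomorphism `F : A → B` with
`F(x_i) = x_iⁿ`, and any such homomorphism is injective. -/
theorem frobenius_quantumTorus {R : Type} [CommRing R] [IsDomain R] {p : ℕ} (s : Rˣ)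
    (U : Matrix (Fin p) (Fin p) ℤ) (hU : ∀ i j, U j i = -U i j)
    (n : ℕ) (hn : 0 < n)
    {A B : Type} [Ring A] [Algebra R A] [Ring B] [Algebra R B]
    (xA : Fin p → Aˣ) (bA : Module.Basis (Fin p → ℤ) R A)
    (hA : IsQuantumTorus s (((n : ℤ) ^ 2) • U) xA bA)
    (xB : Fin p → Bˣ) (bB : Module.Basis (Fin p → ℤ) R B)
    (hB : IsQuantumTorus s U xB bB) :
    (∃! F : A →ₐ[R] B, ∀ i, F ((xA i : A)) = ((xB i : B)) ^ n)
    ∧ ∀ F : A →ₐ[R] B, (∀ i, F ((xA i : A)) = ((xB i : B)) ^ n) → Function.Injective F :=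
  frobenius_quantumTorus_general s U n hn xA bA hA xB bB hB
end

section
/- Let Λ ⊂ ℤ^p be a submonoid that is primitive in its group completion Λ̄ (i.e., if c·k ∈ Λ for some positive integer c and k ∈ Λ̄, then k ∈ Λ), and let P ⊂ ℝ^p be a convex polytope with vertices in ℤ^p. If all vertices v_1,...,v_r of P lie in Λ and v ∈ Λ̄ is a lattice point in P, then v ∈ Λ. -/
set_option maxHeartbeats 1000000

open Finset

/-- A rational vector in the real span of (casts of) rational vectors lies in the
rational span. -/
lemma rat_mem_span_of_real {n : ℕ} (s : Finset (Fin n → ℚ)) (b : Fin n → ℚ)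
    (hb : (fun j => (b j : ℝ)) ∈ Submodule.span ℝ
      ((fun q : Fin n → ℚ => fun j => ((q j : ℚ) : ℝ)) '' (s : Set (Fin n → ℚ)))) :
    b ∈ Submodule.span ℚ (s : Set (Fin n → ℚ)) := by
  by_contra h
  obtain ⟨φ, hφb, hφ⟩ :=
    (Submodule.span ℚ (s : Set (Fin n → ℚ))).exists_dual_map_eq_bot_of_notMem h inferInstance
  set ψ : (Fin n → ℝ) →ₗ[ℝ] ℝ :=
    ∑ i, (((φ (Pi.single i 1) : ℚ) : ℝ)) • LinearMap.proj i with hψ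
  have key : ∀ q : Fin n → ℚ, ψ (fun j => (q j : ℝ)) = ((φ q : ℚ) : ℝ) := by
    intro q
    have hq : φ q = ∑ i, q i * φ (Pi.single i 1) := by
      conv_lhs => rw [← Finset.univ_sum_single q]
      rw [map_sum]
      refine Finset.sum_congr rfl fun i _ => ?_
      have hsingle : Pi.single i (q i) = q i • (Pi.single i 1 : Fin n → ℚ) := by
        rw [← Pi.single_smul, smul_eq_mul, mul_one]
      rw [hsingle, map_smul, smul_eq_mul]
    rw [hq]
    push_cast
    simp [hψ, LinearMap.sum_apply, LinearMap.smul_apply, LinearMap.proj_apply, mul_comm]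
  have hker : Submodule.span ℝ
      ((fun q : Fin n → ℚ => fun j => ((q j : ℚ) : ℝ)) '' (s : Set (Fin n → ℚ)))
      ≤ LinearMap.ker ψ := by
    rw [Submodule.span_le]
    rintro _ ⟨q, hq, rfl⟩
    have hq0 : φ q = 0 := by
      have hmem : φ q ∈ (Submodule.span ℚ (s : Set (Fin n → ℚ))).map φ :=
        ⟨q, Submodule.subset_span hq, rfl⟩
      rw [hφ] at hmem
      simpa using hmem
    simp [LinearMap.mem_ker, key, hq0]
  have h2 := hker hb
  rw [LinearMap.mem_ker, key] at h2
  exact hφb (by exact_mod_cast h2)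

/-- For a nonnegative rational `q` whose denominator divides `N`, `N * q` is a natural
number. -/
lemma exists_nat_eq_mul {q : ℚ} (hq : 0 ≤ q) {N : ℕ} (hd : q.den ∣ N) :
    ∃ m : ℕ, (m : ℚ) = (N : ℚ) * q := by
  obtain ⟨e, he⟩ := hd
  have h0 : (q.den : ℚ) ≠ 0 := by exact_mod_cast q.den_ne_zero
  have hden : ((q.den : ℚ)) * q = (q.num : ℚ) := by
    rw [mul_comm, ← eq_div_iff h0]
    exact (Rat.num_div_den q).symm
  have hnum : (0 : ℤ) ≤ q.num := Rat.num_nonneg.2 hq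
  refine ⟨e * q.num.toNat, ?_⟩
  have ht : ((q.num.toNat : ℕ) : ℚ) = (q.num : ℚ) := by
    exact_mod_cast Int.toNat_of_nonneg hnum
  subst he
  push_cast
  rw [ht, show ((q.den : ℚ)) * (e : ℚ) * q = (e : ℚ) * ((q.den : ℚ) * q) by ring, hden]

/-- Let `Λ ⊆ ℤ^p` be a submonoid that is primitive in its group completion
`Λ̄` (= the subgroup generated by `Λ`): `c • k ∈ Λ` with `c > 0` and `k ∈ Λ̄` implies
`k ∈ Λ`. If all vertices of an integral polytope `P` lie in `Λ` and `v ∈ Λ̄` is a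
lattice point of `P` (i.e. its image in `ℝ^p` belongs to the convex hull of the images
of the vertices), then `v ∈ Λ`. -/
theorem mem_of_primitive_of_mem_convexHull (p : ℕ) (Λ : AddSubmonoid (Fin p → ℤ))
    (hprim : ∀ (c : ℕ) (k : Fin p → ℤ), 0 < c →
      k ∈ AddSubgroup.closure (Λ : Set (Fin p → ℤ)) → c • k ∈ Λ → k ∈ Λ)
    (V : Finset (Fin p → ℤ)) (hV : ∀ w ∈ V, w ∈ Λ)
    (v : Fin p → ℤ) (hv : v ∈ AddSubgroup.closure (Λ : Set (Fin p → ℤ)))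
    (hconv : (fun i => (v i : ℝ)) ∈
      convexHull ℝ ((fun k : Fin p → ℤ => fun i => (k i : ℝ)) '' (V : Set (Fin p → ℤ)))) :
    v ∈ Λ := by
  classical
  set e : (Fin p → ℤ) → (Fin p → ℝ) := fun k i => (k i : ℝ) with he
  have einj : Function.Injective e := by
    intro a b hab
    funext i
    have h := congrFun hab i
    simp only [he] at h
    exact_mod_cast h
  rw [convexHull_eq_union] at hconv
  simp only [Set.mem_iUnion] at hconv
  obtain ⟨t, hts, hai, hvt⟩ := hconv
  -- pull back `t` to a subset `T` of `V`
  set T : Finset (Fin p → ℤ) := V.filter (fun k => e k ∈ t) with hT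
  have hTV : ∀ k ∈ T, k ∈ V := fun k hk => (Finset.mem_filter.1 hk).1
  have himg : t = T.image e := by
    ext y
    constructor
    · intro hy
      obtain ⟨k, hkV, rfl⟩ := hts hy
      exact Finset.mem_image.2 ⟨k, Finset.mem_filter.2 ⟨hkV, hy⟩, rfl⟩
    · intro hy
      obtain ⟨k, hk, rfl⟩ := Finset.mem_image.1 hy
      exact (Finset.mem_filter.1 hk).2
  have hinjT : ∀ x ∈ T, ∀ y ∈ T, e x = e y → x = y := fun x _ y _ h => einj h
  rw [Finset.convexHull_eq] at hvt
  obtain ⟨w, hw0, hw1, hwc⟩ := hvt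
  rw [Finset.centerMass_eq_of_sum_1 _ _ hw1] at hwc
  rw [himg, Finset.sum_image hinjT] at hw1
  rw [himg, Finset.sum_image hinjT] at hwc
  set c : (Fin p → ℤ) → ℝ := fun k => w (e k) with hc
  have hwc' : ∑ k ∈ T, c k • e k = (fun i => (v i : ℝ)) := by
    simpa only [hc, id_eq] using hwc
  -- homogenized rational vectors
  set q : (Fin p → ℤ) → (Fin (p + 1) → ℚ) :=
    fun k => Fin.cons 1 (fun i => (k i : ℚ)) with hq
  have qinj : Function.Injective q := by
    intro a b hab
    funext i
    have := congrFun hab i.succ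
    simp only [hq, Fin.cons_succ] at this
    exact_mod_cast this
  set b : Fin (p + 1) → ℚ := Fin.cons 1 (fun i => (v i : ℚ)) with hb
  set s : Finset (Fin (p + 1) → ℚ) := T.image q with hs
  -- the real cast of `b` lies in the real span of the casts of `s`
  have hbspan : (fun j => (b j : ℝ)) ∈ Submodule.span ℝ
      ((fun u : Fin (p + 1) → ℚ => fun j => ((u j : ℚ) : ℝ)) '' (s : Set (Fin (p + 1) → ℚ))) := by
    have hrep : (fun j => (b j : ℝ)) =
        ∑ k ∈ T, c k • (fun j => ((q k j : ℚ) : ℝ)) := by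
      funext j
      rw [Finset.sum_apply]
      induction j using Fin.cases with
      | zero =>
        simp only [hb, hq, Fin.cons_zero, Pi.smul_apply, smul_eq_mul]
        push_cast
        simp only [mul_one]
        exact_mod_cast hw1.symm
      | succ i =>
        simp only [hb, hq, Fin.cons_succ, Pi.smul_apply, smul_eq_mul]
        have := congrFun hwc' i
        simp only [he, Finset.sum_apply, Pi.smul_apply, smul_eq_mul] at this
        push_cast
        exact this.symm
    rw [hrep]
    refine Submodule.sum_mem _ fun k hk => Submodule.smul_mem _ _ (Submodule.subset_span ?_)
    exact ⟨q k, Finset.mem_coe.2 (Finset.mem_image_of_mem q hk), rfl⟩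
  have hbQ : b ∈ Submodule.span ℚ (s : Set (Fin (p + 1) → ℚ)) :=
    rat_mem_span_of_real s b hbspan
  rw [Submodule.mem_span_finset] at hbQ
  obtain ⟨f, -, hf⟩ := hbQ
  rw [hs, Finset.sum_image (fun x _ y _ h => qinj h)] at hf
  set r : (Fin p → ℤ) → ℚ := fun k => f (q k) with hr
  -- extract the two components of the rational identity
  have hr1 : ∑ k ∈ T, r k = 1 := by
    have := congrFun hf 0
    simpa [hq, hb, Fin.cons_zero, Finset.sum_apply] using this
  have hrv : ∀ i, ∑ k ∈ T, r k * (k i : ℚ) = (v i : ℚ) := by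
    intro i
    have := congrFun hf i.succ
    simpa [hq, hb, Fin.cons_succ, Finset.sum_apply] using this
  -- uniqueness of barycentric coordinates: r is nonnegative on T
  have haiT : AffineIndependent ℝ (fun k : ↥T => e ↑k) := by
    have hmem : ∀ k : ↥T, e ↑k ∈ t := by
      intro k
      rw [himg]
      exact Finset.mem_image_of_mem e k.2
    exact hai.comp_embedding
      ⟨fun k => ⟨e ↑k, hmem k⟩, fun a b hab => Subtype.ext (einj (by
        simpa using congrArg Subtype.val hab))⟩
  have hsum1 : ∑ k : ↥T, c ↑k = 1 := by
    rw [Finset.sum_coe_sort T (fun k => c k)]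
    exact hw1
  have hsum2 : ∑ k : ↥T, ((r ↑k : ℚ) : ℝ) = 1 := by
    rw [Finset.sum_coe_sort T (fun k => ((r k : ℚ) : ℝ))]
    exact_mod_cast congrArg (fun x : ℚ => (x : ℝ)) hr1
  have heqcomb : (fun k : ↥T => c ↑k) = fun k : ↥T => ((r ↑k : ℚ) : ℝ) := by
    apply (affineIndependent_iff_eq_of_fintype_affineCombination_eq ℝ
      (fun k : ↥T => e ↑k)).1 haiT _ _ hsum1 hsum2
    rw [Finset.univ.affineCombination_eq_linear_combination _ _ hsum1,
      Finset.univ.affineCombination_eq_linear_combination _ _ hsum2]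
    rw [Finset.sum_coe_sort T (fun k => c k • e k),
      Finset.sum_coe_sort T (fun k => ((r k : ℚ) : ℝ) • e k)]
    rw [hwc']
    funext i
    rw [Finset.sum_apply]
    simp only [he, Pi.smul_apply, smul_eq_mul]
    have := hrv i
    have hcast : ((∑ k ∈ T, r k * (k i : ℚ) : ℚ) : ℝ) = ((v i : ℚ) : ℝ) := by
      exact_mod_cast congrArg (fun x : ℚ => (x : ℝ)) this
    push_cast at hcast
    exact hcast.symm
  have hrpos : ∀ k ∈ T, 0 ≤ r k := by
    intro k hk
    have h1 : c k = ((r k : ℚ) : ℝ) := congrFun heqcomb ⟨k, hk⟩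
    have h2 : 0 ≤ c k := hw0 (e k) (by rw [himg]; exact Finset.mem_image_of_mem e hk)
    rw [h1] at h2
    exact_mod_cast h2
  -- clear denominators
  set N : ℕ := ∏ k ∈ T, (r k).den with hN
  have hNpos : 0 < N := Finset.prod_pos fun k _ => (r k).pos
  have hg : ∀ k ∈ T, ∃ m : ℕ, (m : ℚ) = (N : ℚ) * r k := by
    intro k hk
    exact exists_nat_eq_mul (hrpos k hk) (Finset.dvd_prod_of_mem _ hk)
  choose g hgq using fun k (hk : k ∈ T) => hg k hk
  -- the integral identity `N • v = ∑ g k • k`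
  have hkey : N • v = ∑ k ∈ T.attach, g ↑k k.2 • (k : Fin p → ℤ) := by
    funext i
    have hQ : ((N : ℚ)) * (v i : ℚ) = ∑ k ∈ T.attach, (g ↑k k.2 : ℚ) * ((k : Fin p → ℤ) i : ℚ) := by
      rw [← hrv i, Finset.mul_sum,
        ← Finset.sum_attach T (fun k => (N : ℚ) * (r k * (k i : ℚ)))]
      refine Finset.sum_congr rfl fun k _ => ?_
      rw [show ((N : ℚ)) * (r ↑k * ((k : Fin p → ℤ) i : ℚ))
          = ((N : ℚ) * r ↑k) * ((k : Fin p → ℤ) i : ℚ) by ring, ← hgq ↑k k.2]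
    have : ((N • v) i : ℚ) = ((∑ k ∈ T.attach, g ↑k k.2 • (k : Fin p → ℤ)) i : ℚ) := by
      rw [Finset.sum_apply]
      push_cast
      simpa using hQ
    exact_mod_cast this
  have hmemΛ : N • v ∈ Λ := by
    rw [hkey]
    exact AddSubmonoid.sum_mem _ fun k _ =>
      nsmul_mem (hV ↑k (hTV ↑k k.2)) (g ↑k k.2)
  exact hprim N v hNpos hv hmemΛ
end

section
/- Let ξ be a root of unity with N = ord(ξ^4) (the order of ξ^4 as a root of unity) and ε = ξ^{N²}. Then T_N(-ξ² - ξ^{-2}) = -ε² - ε^{-2}, where T_N is the N-th Chebyshev polynomial of the first kind. Moreover ε ∈ {1, -1, i, -i} and ξ^{2N} = ±1. -/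
open Polynomial

/-- Chebyshev polynomials of the first kind (normalization `T 0 = 2`). -/
noncomputable def chebT : ℕ → Polynomial ℤ
  | 0 => 2
  | 1 => X
  | n + 2 => X * chebT (n + 1) - chebT n

/-!
`T_N` is the Dickson polynomial `D_N(X, 1)`, so `T_N(y + y⁻¹) = y^N + y^{-N}`; with `y = -ξ²` and
`s = ξ^{2N}` both sides become multiples of `2`: the left side is `2 (-1)^N s` and the right side
is `-2 s^N`, since `s² = ξ^{4N} = 1`. If `s = -1` these agree for every `N`; if `s = 1`, then `N`
is odd, as `N = 2k` would give `(ξ⁴)^k = 1` against the minimality of `N`. Finally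
`ε⁴ = s^{2N} = 1` places `ε` among the fourth roots of unity.
-/

theorem chebT_eq_dickson (n : ℕ) : chebT n = dickson 1 (1 : ℤ) n := by
  induction n using Nat.twoStepInduction with
  | zero => norm_num [chebT, dickson_zero]
  | one => rfl
  | more n ih₂ ih₁ => rw [chebT, dickson_add_two, ih₁, ih₂, C_1, one_mul]

theorem aeval_chebT_add {R : Type*} [CommRing R] (x y : R) (h : x * y = 1) (n : ℕ) :
    aeval (x + y) (chebT n) = x ^ n + y ^ n := by
  rw [chebT_eq_dickson, aeval_def, eval₂_eq_eval_map, map_dickson, map_one]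
  exact dickson_one_one_eval_add_inv x y h n

theorem Complex.mem_of_pow_four_eq_one {z : ℂ} (hz : z ^ 4 = 1) :
    z ∈ ({1, -1, I, -I} : Set ℂ) := by
  rw [show z ^ 4 = (z ^ 2) ^ 2 by ring, sq_eq_one_iff, ← I_sq, sq_eq_one_iff,
    sq_eq_sq_iff_eq_or_eq_neg] at hz
  rcases hz with (h | h) | (h | h) <;> simp [h]

theorem odd_of_pow_two_mul_eq_one {M : Type*} [Monoid M] {x : M} {N : ℕ}
    (hN : 0 < N) (hmin : ∀ m : ℕ, 0 < m → (x ^ 4) ^ m = 1 → N ≤ m) (hx : x ^ (2 * N) = 1) :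
    Odd N := by
  refine Nat.not_even_iff_odd.mp fun ⟨k, hk⟩ => ?_
  have : N ≤ k := hmin k (by omega) (by rw [← pow_mul, show 4 * k = 2 * N by omega, hx])
  omega

theorem pow_two_mul_eq_neg_one_or_odd {R : Type*} [Ring R] [NoZeroDivisors R] {x : R} {N : ℕ}
    (hN : 0 < N) (h1 : (x ^ 4) ^ N = 1) (hmin : ∀ m : ℕ, 0 < m → (x ^ 4) ^ m = 1 → N ≤ m) :
    x ^ (2 * N) = -1 ∨ x ^ (2 * N) = 1 ∧ Odd N := by
  have hsq : (x ^ (2 * N)) ^ 2 = 1 := by rw [← pow_mul, ← h1, ← pow_mul]; ring_nf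
  rcases sq_eq_one_iff.mp hsq with h | h
  · exact .inr ⟨h, odd_of_pow_two_mul_eq_one hN hmin h⟩
  · exact .inl h

theorem chebT_neg_xi_sq_general (ξ : ℂ)
    (N : ℕ) (hN : 0 < N) (h1 : (ξ ^ 4) ^ N = 1)
    (hmin : ∀ m : ℕ, 0 < m → (ξ ^ 4) ^ m = 1 → N ≤ m) :
    (Polynomial.aeval (-ξ ^ 2 - (ξ⁻¹) ^ 2)) (chebT N)
        = -(ξ ^ (N ^ 2)) ^ 2 - ((ξ ^ (N ^ 2))⁻¹) ^ 2
    ∧ ξ ^ (N ^ 2) ∈ ({1, -1, Complex.I, -Complex.I} : Set ℂ)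
    ∧ (ξ ^ (2 * N) = 1 ∨ ξ ^ (2 * N) = -1) := by
  have hξ : ξ ≠ 0 := by rintro rfl; simp [hN.ne'] at h1
  have hcases := pow_two_mul_eq_neg_one_or_odd hN h1 hmin
  have hε : (ξ ^ N ^ 2) ^ 2 = (ξ ^ (2 * N)) ^ N := by rw [← pow_mul, ← pow_mul]; ring_nf
  have hlhs : aeval (-ξ ^ 2 - ξ⁻¹ ^ 2) (chebT N) = (-1) ^ N * (ξ ^ (2 * N) + (ξ ^ (2 * N))⁻¹) := by
    rw [sub_eq_add_neg, aeval_chebT_add _ _ (by field_simp), neg_pow (ξ ^ 2), neg_pow (ξ⁻¹ ^ 2),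
      ← pow_mul, ← pow_mul, inv_pow, mul_add]
  refine ⟨?_, Complex.mem_of_pow_four_eq_one ?_, hcases.symm.imp And.left id⟩
  · rw [hlhs, inv_pow, hε]
    rcases hcases with h | ⟨h, hodd⟩
    · rcases N.even_or_odd with he | ho
      · rw [h, he.neg_one_pow]; norm_num
      · rw [h, ho.neg_one_pow]; norm_num
    · rw [h, hodd.neg_one_pow]; norm_num
  · have hs : (ξ ^ (2 * N)) ^ 2 = 1 := by rcases hcases with h | h <;> simp [h]
    rw [show 4 = 2 * 2 by rfl, pow_mul, hε, pow_right_comm, hs, one_pow]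

/-- Let `ξ` be a complex root of unity, `N = ord(ξ⁴)` and `ε = ξ^{N²}`. Then
`T_N(-ξ² - ξ⁻²) = -ε² - ε⁻²`; moreover `ε ∈ {1, -1, i, -i}` and `ξ^{2N} = ±1`. -/
theorem chebT_neg_xi_sq (ξ : ℂ) (hroot : ∃ m : ℕ, 0 < m ∧ ξ ^ m = 1)
    (N : ℕ) (hN : 0 < N) (h1 : (ξ ^ 4) ^ N = 1)
    (hmin : ∀ m : ℕ, 0 < m → (ξ ^ 4) ^ m = 1 → N ≤ m) :
    (Polynomial.aeval (-ξ ^ 2 - (ξ⁻¹) ^ 2)) (chebT N)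
        = -(ξ ^ (N ^ 2)) ^ 2 - ((ξ ^ (N ^ 2))⁻¹) ^ 2
    ∧ ξ ^ (N ^ 2) ∈ ({1, -1, Complex.I, -Complex.I} : Set ℂ)
    ∧ (ξ ^ (2 * N) = 1 ∨ ξ ^ (2 * N) = -1) :=
  chebT_neg_xi_sq_general ξ N hN h1 hmin
end
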